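/- Let T be an unambiguous, clean and trim 1-nT computing a continuous partial function f : A^ω ⇀ B^ω. Then for every initial step (J,u,C), the values val(q) for q ∈ C are pairwise mutual prefixes: for all p,q ∈ C, either val(p) is a prefix of val(q) or val(q) is a prefix of val(p). -/

import Mathlib

/-- `u` is a prefix of the infinite word `y`. -/
def PrefixOf {B : Type} (u : List B) (y : ℕ → B) : Prop :=
  ∀ (i : ℕ) (h : i < u.length), u.get ⟨i, h⟩ = y i

/-- Concatenation of a finite word and an infinite word. -/
def listPrepend {B : Type} (u : List B) (y : ℕ → B) : ℕ → B :=
  fun i => if h : i < u.length then u.get ⟨i, h⟩ else y (i - u.length)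

/-- The finite word `v` repeated `n` times. -/
def powList {B : Type} (v : List B) (n : ℕ) : List B :=
  (List.replicate n v).flatten

/-- The infinite word `y` equals `u · v^ω` (meaningful when `v ≠ []`). -/
def EqUVomega {B : Type} (u v : List B) (y : ℕ → B) : Prop :=
  ∀ n : ℕ, PrefixOf (u ++ powList v n) y

/-- A one-way nondeterministic transducer (1-nT). The output function is given on
all triples; it is only relevant on the transition relation. -/
structure NT (A B : Type) where
  Q : Type
  fin : Fintype Q
  I : Set Q
  F : Set Q
  trans : Q → A → Q → Prop
  out : Q → A → Q → List B

attribute [instance] NT.fin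

namespace NT

variable {A B : Type}

/-- `FinRun T q u α q'` means `q →^{u|α} q'`. -/
inductive FinRun (T : NT A B) : T.Q → List A → List B → T.Q → Prop
  | nil (q : T.Q) : FinRun T q [] [] q
  | cons {q q' q'' : T.Q} {a : A} {u : List A} {α : List B} :
      T.trans q a q' → FinRun T q' u α q'' →
      FinRun T q (a :: u) (T.out q a q' ++ α) q''

/-- Infinite run on `x` (the `i`-th transition reads `x i`). -/
def IsRun (T : NT A B) (x : ℕ → A) (ρ : ℕ → T.Q) : Prop :=
  ∀ i : ℕ, T.trans (ρ i) (x i) (ρ (i + 1))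

/-- Büchi condition: final states are visited infinitely often. -/
def Final (T : NT A B) (ρ : ℕ → T.Q) : Prop :=
  ∀ i : ℕ, ∃ j : ℕ, i ≤ j ∧ ρ j ∈ T.F

/-- Accepting run: an initial and final run. -/
def Accepting (T : NT A B) (x : ℕ → A) (ρ : ℕ → T.Q) : Prop :=
  T.IsRun x ρ ∧ ρ 0 ∈ T.I ∧ T.Final ρ

/-- Output along the first `n` transitions of a run. -/
def outPrefix (T : NT A B) (x : ℕ → A) (ρ : ℕ → T.Q) (n : ℕ) : List B :=
  ((List.range n).map (fun i => T.out (ρ i) (x i) (ρ (i + 1)))).flatten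

/-- The output along the run is infinite. -/
def InfiniteOutput (T : NT A B) (x : ℕ → A) (ρ : ℕ → T.Q) : Prop :=
  ∀ m : ℕ, ∃ n : ℕ, m ≤ (T.outPrefix x ρ n).length

/-- The (infinite) output along the run equals `y`. -/
def OutEq (T : NT A B) (x : ℕ → A) (ρ : ℕ → T.Q) (y : ℕ → B) : Prop :=
  ∀ n : ℕ, PrefixOf (T.outPrefix x ρ n) y

/-- Every input labels at most one accepting run. -/
def Unambiguous (T : NT A B) : Prop :=
  ∀ x ρ₁ ρ₂, T.Accepting x ρ₁ → T.Accepting x ρ₂ → ρ₁ = ρ₂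

/-- The partial function computed by an unambiguous 1-nT. -/
def Computes (T : NT A B) (f : (ℕ → A) → Option (ℕ → B)) : Prop :=
  ∀ x y, f x = some y ↔
    ∃ ρ, T.Accepting x ρ ∧ T.InfiniteOutput x ρ ∧ T.OutEq x ρ y

/-- Every state occurs in some accepting run. -/
def Trim (T : NT A B) : Prop :=
  ∀ q : T.Q, ∃ x ρ, T.Accepting x ρ ∧ ∃ i, ρ i = q

/-- The output along every accepting run is infinite. -/
def Clean (T : NT A B) : Prop :=
  ∀ x ρ, T.Accepting x ρ → T.InfiniteOutput x ρ

end NT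

/-- Continuity (for the Cantor topology) of a partial function on infinite words. -/
def ContinuousPartial {A B : Type} (f : (ℕ → A) → Option (ℕ → B)) : Prop :=
  ∀ x fx, f x = some fx → ∀ n : ℕ, ∃ p : ℕ, ∀ y fy, f y = some fy →
    (∀ i < p, x i = y i) → ∀ i < n, fx i = fy i

namespace NT

variable {A B : Type}

/-- A compatible set of states: a common infinite future, one branch of which is final. -/
def Compatible (T : NT A B) (C : Set T.Q) : Prop :=
  ∃ (x : ℕ → A) (ρ : T.Q → ℕ → T.Q),
    (∀ q ∈ C, ρ q 0 = q ∧ T.IsRun x (ρ q)) ∧ ∃ q ∈ C, T.Final (ρ q)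

/-- `(C,u,D)` is a pre-step, with predecessor map `pre` and outputs `val`. -/
def PreStepOn (T : NT A B) (C : Set T.Q) (u : List A) (D : Set T.Q)
    (pre : T.Q → T.Q) (val : T.Q → List B) : Prop :=
  T.Compatible C ∧ T.Compatible D ∧
  (∀ q ∈ D, pre q ∈ C ∧ T.FinRun (pre q) u (val q) q) ∧
  (∀ q ∈ D, ∀ p ∈ C, (∃ α, T.FinRun p u α q) → p = pre q)

/-- `(C,u,D)` is a step: a pre-step with surjective predecessor map. -/
def StepOn (T : NT A B) (C : Set T.Q) (u : List A) (D : Set T.Q)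
    (pre : T.Q → T.Q) (val : T.Q → List B) : Prop :=
  T.PreStepOn C u D pre val ∧ ∀ p ∈ C, ∃ q ∈ D, pre q = p

/-- `(J,u,C)` is an initial step. -/
def InitStepOn (T : NT A B) (J : Set T.Q) (u : List A) (C : Set T.Q)
    (pre : T.Q → T.Q) (val : T.Q → List B) : Prop :=
  J ⊆ T.I ∧ T.StepOn J u C pre val

/-- `com` is the longest common prefix of the `val q` (`q ∈ C`) and
`adv q` is the advance of `q`, i.e. `val q = com ++ adv q`. -/
def AdvData (T : NT A B) (C : Set T.Q) (val : T.Q → List B)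
    (com : List B) (adv : T.Q → List B) : Prop :=
  (∀ q ∈ C, val q = com ++ adv q) ∧
  (∀ c : List B, (∀ q ∈ C, c <+: val q) → c <+: com)

end NT

/-!
Let `q₀ ∈ C` be a state whose run on the common future `x` of `C` is final. Prefixing it with
`pre q₀ →^u q₀` gives an accepting run on `u x`, so `y₀ := f (u x)` is defined. For any `r ∈ C`, follow
the run of `r` on `x` for `m` letters and then, by trimness, continue with a final tail: this
yields inputs that agree with `u x` on arbitrarily long prefixes and whose images begin with `val r`.
Continuity of `f` at `u x` then forces `val r` to be a prefix of `y₀`. Being prefixes of one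
infinite word, the `val r` are pairwise comparable.
-/

section Words

variable {B : Type}

lemma listPrepend_nil (y : ℕ → B) : listPrepend [] y = y := by
  funext i; simp [listPrepend]

lemma listPrepend_cons_zero (b : B) (u : List B) (y : ℕ → B) : listPrepend (b :: u) y 0 = b := by
  simp [listPrepend]

lemma listPrepend_cons_succ (b : B) (u : List B) (y : ℕ → B) (i : ℕ) :
    listPrepend (b :: u) y (i + 1) = listPrepend u y i := by
  by_cases h : i < u.length <;> simp [listPrepend, h]

lemma listPrepend_append_range_map (u : List B) (y z : ℕ → B) (m : ℕ) {j : ℕ}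
    (hj : j < u.length + m) :
    listPrepend (u ++ (List.range m).map y) z j = listPrepend u y j := by
  have hj' : j < (u ++ (List.range m).map y).length := by simpa using hj
  by_cases hju : j < u.length
  · simp only [listPrepend, dif_pos hju, dif_pos hj', List.get_eq_getElem]
    exact List.getElem_append_left _
  · simp only [listPrepend, dif_neg hju, dif_pos hj', List.get_eq_getElem]
    rw [List.getElem_append_right (by omega)]
    simp

lemma PrefixOf.mono {l₁ l₂ : List B} {y : ℕ → B} (h₁₂ : l₁ <+: l₂) (h : PrefixOf l₂ y) :
    PrefixOf l₁ y := by
  intro i hi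
  simpa [List.get_eq_getElem, h₁₂.getElem hi] using h i (hi.trans_le h₁₂.length_le)

lemma PrefixOf.prefix_of_length_le {l₁ l₂ : List B} {y : ℕ → B} (h₁ : PrefixOf l₁ y)
    (h₂ : PrefixOf l₂ y) (hle : l₁.length ≤ l₂.length) : l₁ <+: l₂ := by
  rw [List.prefix_iff_eq_take]
  refine List.ext_getElem (by simpa using hle) fun i hi _ => ?_
  have e₁ := h₁ i hi
  have e₂ := h₂ i (by omega)
  simp only [List.get_eq_getElem] at e₁ e₂
  rw [List.getElem_take, e₁, e₂]

lemma PrefixOf.prefix_or_prefix {l₁ l₂ : List B} {y : ℕ → B} (h₁ : PrefixOf l₁ y)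
    (h₂ : PrefixOf l₂ y) : l₁ <+: l₂ ∨ l₂ <+: l₁ :=
  (le_total l₁.length l₂.length).imp (h₁.prefix_of_length_le h₂) (h₂.prefix_of_length_le h₁)

lemma PrefixOf.of_agree {l : List B} {y z : ℕ → B} (h : PrefixOf l y)
    (hyz : ∀ i < l.length, y i = z i) : PrefixOf l z :=
  fun i hi => (h i hi).trans (hyz i hi)

end Words

namespace NT

variable {A B : Type} {T : NT A B}

lemma outPrefix_zero (x : ℕ → A) (ρ : ℕ → T.Q) : T.outPrefix x ρ 0 = [] := by
  simp [outPrefix]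

lemma outPrefix_succ (x : ℕ → A) (ρ : ℕ → T.Q) (n : ℕ) :
    T.outPrefix x ρ (n + 1) =
      T.out (ρ 0) (x 0) (ρ 1) ++ T.outPrefix (fun i => x (i + 1)) (fun i => ρ (i + 1)) n := by
  simp only [outPrefix, List.range_succ_eq_map, List.map_cons, List.map_map, List.flatten_cons]
  rfl

lemma outPrefix_prefix_of_le (x : ℕ → A) (ρ : ℕ → T.Q) {m n : ℕ} (h : m ≤ n) :
    T.outPrefix x ρ m <+: T.outPrefix x ρ n := by
  obtain ⟨k, rfl⟩ := Nat.exists_eq_add_of_le h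
  simp only [outPrefix, List.range_add, List.map_append, List.flatten_append]
  exact List.prefix_append _ _

lemma InfiniteOutput.exists_outEq {x : ℕ → A} {ρ : ℕ → T.Q} (h : T.InfiniteOutput x ρ) :
    ∃ y : ℕ → B, T.OutEq x ρ y := by
  choose n hn using fun i => h (i + 1)
  refine ⟨fun i => (T.outPrefix x ρ (n i))[i]'(hn i), fun k i hi => ?_⟩
  simp only [List.get_eq_getElem]
  rcases le_total k (n i) with hk | hk
  · exact (outPrefix_prefix_of_le x ρ hk).getElem hi
  · exact ((outPrefix_prefix_of_le x ρ hk).getElem (hn i)).symm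

lemma Computes.exists_apply_eq_some {f : (ℕ → A) → Option (ℕ → B)} (hT : T.Computes f)
    (hCl : T.Clean) {x : ℕ → A} {ρ : ℕ → T.Q} (hacc : T.Accepting x ρ) :
    ∃ y, f x = some y ∧ T.OutEq x ρ y := by
  obtain ⟨y, hy⟩ := (hCl x ρ hacc).exists_outEq
  exact ⟨y, (hT x y).mpr ⟨ρ, hacc, hCl x ρ hacc, hy⟩, hy⟩

lemma Final.of_shift {ρ σ : ℕ → T.Q} {d : ℕ} (hρ : T.Final ρ) (hσ : ∀ k, σ (d + k) = ρ k) :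
    T.Final σ := by
  intro i
  obtain ⟨j, hij, hj⟩ := hρ i
  exact ⟨d + j, by omega, by rwa [hσ]⟩

lemma Trim.exists_final_run (hTr : T.Trim) (q : T.Q) :
    ∃ (z : ℕ → A) (τ : ℕ → T.Q), τ 0 = q ∧ T.IsRun z τ ∧ T.Final τ := by
  obtain ⟨z, τ, ⟨hrun, -, hfin⟩, i, rfl⟩ := hTr q
  refine ⟨fun k => z (i + k), fun k => τ (i + k), rfl, fun k => hrun (i + k), fun j => ?_⟩
  obtain ⟨k, hk, hF⟩ := hfin (i + j)
  exact ⟨k - i, by omega, show τ (i + (k - i)) ∈ T.F by rwa [Nat.add_sub_cancel' (by omega)]⟩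

lemma FinRun.append {p q r : T.Q} {u v : List A} {α β : List B}
    (h₁ : T.FinRun p u α q) (h₂ : T.FinRun q v β r) : T.FinRun p (u ++ v) (α ++ β) r := by
  induction h₁ with
  | nil => simpa using h₂
  | cons ht _ ih =>
    rw [List.cons_append, List.append_assoc]
    exact .cons ht (ih h₂)

lemma IsRun.finRun_range {x : ℕ → A} {ρ : ℕ → T.Q} (hρ : T.IsRun x ρ) (m : ℕ) :
    T.FinRun (ρ 0) ((List.range m).map x) (T.outPrefix x ρ m) (ρ m) := by
  induction m generalizing x ρ with
  | zero => simpa [outPrefix_zero] using FinRun.nil (ρ 0)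
  | succ m ih =>
    rw [outPrefix_succ, List.range_succ_eq_map, List.map_cons, List.map_map]
    exact .cons (hρ 0) (ih fun i => hρ (i + 1))

lemma FinRun.exists_run_listPrepend {p q : T.Q} {u : List A} {α : List B}
    (h : T.FinRun p u α q) {x : ℕ → A} {ρ : ℕ → T.Q} (hρ0 : ρ 0 = q) (hρ : T.IsRun x ρ) :
    ∃ σ : ℕ → T.Q, σ 0 = p ∧ T.IsRun (listPrepend u x) σ ∧
      (∀ k, σ (u.length + k) = ρ k) ∧ T.outPrefix (listPrepend u x) σ u.length = α := by
  induction h with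
  | nil q =>
    refine ⟨ρ, hρ0, ?_, by simp, by simp [outPrefix_zero]⟩
    rwa [listPrepend_nil]
  | @cons p p' _ a v β ht _ ih =>
    obtain ⟨σ, hσ0, hσ, hσρ, hσout⟩ := ih hρ0
    have hx : (fun i => listPrepend (a :: v) x (i + 1)) = listPrepend v x :=
      funext (listPrepend_cons_succ a v x)
    refine ⟨fun | 0 => p | i + 1 => σ i, rfl, ?_, fun k => ?_, ?_⟩
    · rintro (_ | i)
      · rw [listPrepend_cons_zero]
        exact show T.trans p a (σ 0) from hσ0 ▸ ht
      · rw [listPrepend_cons_succ]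
        exact hσ i
    · rw [show (a :: v).length + k = v.length + k + 1 by simp; omega]
      exact hσρ k
    · rw [List.length_cons, outPrefix_succ, hx, listPrepend_cons_zero]
      exact congrArg₂ _ (by dsimp only; rw [hσ0]) hσout

lemma FinRun.exists_accepting_listPrepend {p q : T.Q} {u : List A} {α : List B}
    (hp : p ∈ T.I) (h : T.FinRun p u α q) {x : ℕ → A} {ρ : ℕ → T.Q} (hρ0 : ρ 0 = q)
    (hρ : T.IsRun x ρ) (hfin : T.Final ρ) :
    ∃ σ : ℕ → T.Q, T.Accepting (listPrepend u x) σ ∧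
      T.outPrefix (listPrepend u x) σ u.length = α := by
  obtain ⟨σ, hσ0, hσ, hσρ, hσout⟩ := h.exists_run_listPrepend hρ0 hρ
  exact ⟨σ, ⟨hσ, hσ0 ▸ hp, hfin.of_shift hσρ⟩, hσout⟩

lemma prefixOf_apply_of_finRun {f : (ℕ → A) → Option (ℕ → B)} (hCl : T.Clean) (hTr : T.Trim)
    (hT : T.Computes f) (hcont : ContinuousPartial f) {p q : T.Q} {u : List A} {α : List B}
    (hp : p ∈ T.I) (h : T.FinRun p u α q) {x : ℕ → A} {ρ : ℕ → T.Q} (hρ0 : ρ 0 = q)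
    (hρ : T.IsRun x ρ) {y : ℕ → B} (hy : f (listPrepend u x) = some y) : PrefixOf α y := by
  obtain ⟨m, hm⟩ := hcont _ y hy α.length
  obtain ⟨z, τ, hτ0, hτ, hτfin⟩ := hTr.exists_final_run (ρ m)
  have hext := h.append (hρ0 ▸ hρ.finRun_range m)
  obtain ⟨σ, hσacc, hσout⟩ := hext.exists_accepting_listPrepend hp hτ0 hτ hτfin
  obtain ⟨y', hy', hσy'⟩ := hT.exists_apply_eq_some hCl hσacc
  have hαy' : PrefixOf α y' := (hσout ▸ hσy' _).mono (List.prefix_append _ _)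
  refine hαy'.of_agree fun i hi => (hm _ y' hy' (fun j hj => ?_) i hi).symm
  exact (listPrepend_append_range_map u x z m (by omega)).symm

end NT

theorem initial_step_mutual_prefixes_general
    {A B : Type}
    (T : NT A B) (f : (ℕ → A) → Option (ℕ → B))
    (hCl : T.Clean) (hTr : T.Trim)
    (hT : T.Computes f) (hcont : ContinuousPartial f)
    (J : Set T.Q) (u : List A) (C : Set T.Q)
    (pre : T.Q → T.Q) (val : T.Q → List B)
    (hstep : T.InitStepOn J u C pre val) :
    ∀ p ∈ C, ∀ q ∈ C, val p <+: val q ∨ val q <+: val p := by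
  obtain ⟨hJI, ⟨-, ⟨x, ρ, hρ, q₀, hq₀, hfin⟩, hrun, -⟩, -⟩ := hstep
  have hinit : ∀ r ∈ C, pre r ∈ T.I := fun r hr => hJI (hrun r hr).1
  obtain ⟨σ₀, hσ₀, -⟩ := (hrun q₀ hq₀).2.exists_accepting_listPrepend (hinit q₀ hq₀)
    (hρ q₀ hq₀).1 (hρ q₀ hq₀).2 hfin
  obtain ⟨y₀, hy₀, -⟩ := hT.exists_apply_eq_some hCl hσ₀
  have hprefix : ∀ r ∈ C, PrefixOf (val r) y₀ := fun r hr =>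
    NT.prefixOf_apply_of_finRun hCl hTr hT hcont (hinit r hr) (hrun r hr).2 (hρ r hr).1
      (hρ r hr).2 hy₀
  exact fun p hp q hq => (hprefix p hp).prefix_or_prefix (hprefix q hq)

/-- The outputs along the runs of an initial step are mutual prefixes. -/
theorem initial_step_mutual_prefixes
    {A B : Type} [Fintype A] [Fintype B]
    (T : NT A B) (f : (ℕ → A) → Option (ℕ → B))
    (hU : T.Unambiguous) (hCl : T.Clean) (hTr : T.Trim)
    (hT : T.Computes f) (hcont : ContinuousPartial f)
    (J : Set T.Q) (u : List A) (C : Set T.Q)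
    (pre : T.Q → T.Q) (val : T.Q → List B)
    (hstep : T.InitStepOn J u C pre val) :
    ∀ p ∈ C, ∀ q ∈ C, val p <+: val q ∨ val q <+: val p :=
  initial_step_mutual_prefixes_general T f hCl hTr hT hcont J u C pre val hstep
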